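/- Let P and Q be autoregressive distributions on V^T with conditionals p_t, q_t, let M = ½(P+Q), and define α_t(h) = P_{<t}(h)/(P_{<t}(h)+Q_{<t}(h)) for prefixes h with M_{<t}(h) > 0. Then JS(P ‖ Q) = Σ_{t=1}^T E_{H ∼ M_{<t}} [ D_JS^{α_t(H)}( p_t(·|H) ‖ q_t(·|H) ) ], where D_JS^α(μ‖ν) = α·D_KL(μ ‖ αμ+(1−α)ν) + (1−α)·D_KL(ν ‖ αμ+(1−α)ν) is the skew Jensen–Shannon divergence. -/

import Mathlib

open Finset

/-- KL divergence between two (finitely supported) mass functions, with the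
convention `0 log 0 = 0`. -/
noncomputable def KL {X : Type*} [Fintype X] (μ ν : X → ℝ) : ℝ :=
  ∑ x, if μ x = 0 then 0 else μ x * Real.log (μ x / ν x)

/-- `μ` is a probability mass function on the finite type `X`. -/
def IsPMF {X : Type*} [Fintype X] (μ : X → ℝ) : Prop :=
  (∀ x, 0 ≤ μ x) ∧ ∑ x, μ x = 1

/-- Jensen–Shannon divergence. -/
noncomputable def JS {X : Type*} [Fintype X] (μ ν : X → ℝ) : ℝ :=
  (1/2) * KL μ (fun x => (μ x + ν x) / 2) + (1/2) * KL ν (fun x => (μ x + ν x) / 2)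

/-- Skew Jensen–Shannon divergence with skew parameter `α`. -/
noncomputable def skewJS {X : Type*} [Fintype X] (α : ℝ) (μ ν : X → ℝ) : ℝ :=
  α * KL μ (fun x => α * μ x + (1 - α) * ν x)
    + (1 - α) * KL ν (fun x => α * μ x + (1 - α) * ν x)

/-- The sequence-level distribution on `Fin T → V` induced by an autoregressive
family of conditionals `π t : (Fin t → V) → V → ℝ`. -/
noncomputable def seqProb {V : Type*} (π : (t : ℕ) → (Fin t → V) → V → ℝ) (T : ℕ)
    (x : Fin T → V) : ℝ :=
  ∏ t : Fin T, π t (fun i => x (Fin.castLE t.isLt.le i)) (x t)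

/-- The marginal of the prefix `X_{<t}` under a distribution `P` on `Fin T → V`. -/
noncomputable def prefixMarginal {V : Type*} [Fintype V] [DecidableEq V] {T : ℕ}
    (P : (Fin T → V) → ℝ) {t : ℕ} (ht : t ≤ T) (h : Fin t → V) : ℝ :=
  ∑ x ∈ Finset.univ.filter
      (fun x : Fin T → V => ∀ i : Fin t, x (Fin.castLE ht i) = h i), P x

/-! Write a law on `V^(T+1)` as a prefix law times a last-step conditional. The mixture of
`P(h) p(v | h)` and `Q(h) q(v | h)` is then `M(h) m(v | h)` with `M = (P + Q) / 2` and
`m = α p + (1 - α) q`, `α = P / (P + Q)`. Applying the KL chain rule to both halves of `JS`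
against this factorisation gives `JS(P ⊗ p, Q ⊗ q) = JS(P, Q) + E_M [skewJS_α(p, q)]`, since
`P / 2 = α M` and `Q / 2 = (1 - α) M`. Induction on the length concludes, because prefix
marginals are unchanged when the sequences are extended. -/

section Divergences

variable {X Y H V : Type*} [Fintype X] [Fintype Y] [Fintype H] [Fintype V]

lemma KL_comp_equiv (e : X ≃ Y) (μ ν : Y → ℝ) : KL (μ ∘ e) (ν ∘ e) = KL μ ν :=
  Fintype.sum_equiv e _ _ fun _ => rfl

lemma JS_comp_equiv (e : X ≃ Y) (μ ν : Y → ℝ) : JS (μ ∘ e) (ν ∘ e) = JS μ ν := by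
  rw [JS, JS, ← KL_comp_equiv e μ, ← KL_comp_equiv e ν]
  rfl

lemma KL_prod_eq_add (P R : H → ℝ) (p r : H → V → ℝ) (hp : ∀ h, ∑ v, p h v = 1)
    (hac : ∀ h v, P h * p h v ≠ 0 → R h * r h v ≠ 0) :
    KL (fun x : H × V => P x.1 * p x.1 x.2) (fun x => R x.1 * r x.1 x.2)
      = KL P R + ∑ h, P h * KL (p h) (r h) := by
  simp only [KL, Fintype.sum_prod_type, ← sum_add_distrib]
  refine sum_congr rfl fun h _ => ?_
  by_cases hP : P h = 0
  · simp [hP]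
  have hsplit : ∀ v,
      (if P h * p h v = 0 then 0 else P h * p h v * Real.log (P h * p h v / (R h * r h v)))
        = p h v * (P h * Real.log (P h / R h))
          + P h * (if p h v = 0 then 0 else p h v * Real.log (p h v / r h v)) := by
    intro v
    by_cases hpv : p h v = 0
    · simp [hpv]
    have hR := hac h v (mul_ne_zero hP hpv)
    rw [if_neg (mul_ne_zero hP hpv), if_neg hpv, mul_div_mul_comm,
      Real.log_mul (div_ne_zero hP (left_ne_zero_of_mul hR))
        (div_ne_zero hpv (right_ne_zero_of_mul hR))]
    ring
  simp only [hsplit, sum_add_distrib, ← sum_mul, ← mul_sum, hp, one_mul, if_neg hP]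

/-- When `P + Q = 0` the skew weight `P / (P + Q)` is a junk value, but then both sides vanish. -/
lemma mul_add_mul_div_two_eq {P Q a b : ℝ} (hP : 0 ≤ P) (hQ : 0 ≤ Q) :
    (P * a + Q * b) / 2 = (P + Q) / 2 * (P / (P + Q) * a + (1 - P / (P + Q)) * b) := by
  by_cases hPQ : P + Q = 0
  · obtain rfl : P = 0 := by linarith
    obtain rfl : Q = 0 := by linarith
    simp
  · field_simp
    ring

lemma JS_prod_eq_add (P Q : H → ℝ) (p q : H → V → ℝ) (hP : ∀ h, 0 ≤ P h) (hQ : ∀ h, 0 ≤ Q h)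
    (hp : ∀ h, IsPMF (p h)) (hq : ∀ h, IsPMF (q h)) :
    JS (fun x : H × V => P x.1 * p x.1 x.2) (fun x => Q x.1 * q x.1 x.2)
      = JS P Q + ∑ h, (P h + Q h) / 2 * skewJS (P h / (P h + Q h)) (p h) (q h) := by
  set M : H → ℝ := fun h => (P h + Q h) / 2
  set m : H → V → ℝ := fun h v => P h / (P h + Q h) * p h v + (1 - P h / (P h + Q h)) * q h v
  have hmix : (fun x : H × V => (P x.1 * p x.1 x.2 + Q x.1 * q x.1 x.2) / 2)
      = fun x => M x.1 * m x.1 x.2 :=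
    funext fun x => mul_add_mul_div_two_eq (hP _) (hQ _)
  have hmix_ne : ∀ h v, P h * p h v ≠ 0 ∨ Q h * q h v ≠ 0 → M h * m h v ≠ 0 := by
    intro h v hne
    have hPp := mul_nonneg (hP h) ((hp h).1 v)
    have hQq := mul_nonneg (hQ h) ((hq h).1 v)
    rw [← mul_add_mul_div_two_eq (hP h) (hQ h)]
    rcases hne with hne | hne
    · exact ne_of_gt (by linarith [lt_of_le_of_ne hPp hne.symm])
    · exact ne_of_gt (by linarith [lt_of_le_of_ne hQq hne.symm])
  have hweights : ∑ h, M h * skewJS (P h / (P h + Q h)) (p h) (q h)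
      = (∑ h, P h * KL (p h) (m h) + ∑ h, Q h * KL (q h) (m h)) / 2 := by
    rw [← sum_add_distrib, sum_div]
    exact sum_congr rfl fun h _ => (mul_add_mul_div_two_eq (hP h) (hQ h)).symm
  rw [JS, JS, hmix, hweights,
    KL_prod_eq_add P M p m (fun h => (hp h).2) fun h v hne => hmix_ne h v (Or.inl hne),
    KL_prod_eq_add Q M q m (fun h => (hq h).2) fun h v hne => hmix_ne h v (Or.inr hne)]
  ring

end Divergences

section Sequences

variable {V : Type*}

lemma seqProb_succ (π : (t : ℕ) → (Fin t → V) → V → ℝ) (T : ℕ) (x : Fin (T + 1) → V) :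
    seqProb π (T + 1) x = seqProb π T (Fin.init x) * π T (Fin.init x) (x (Fin.last T)) :=
  Fin.prod_univ_castSucc _

lemma seqProb_snoc (π : (t : ℕ) → (Fin t → V) → V → ℝ) (T : ℕ) (y : Fin T → V) (v : V) :
    seqProb π (T + 1) (Fin.snoc y v) = seqProb π T y * π T y v := by
  rw [seqProb_succ, Fin.init_snoc, Fin.snoc_last]

variable [Fintype V]

lemma seqProb_nonneg (π : (t : ℕ) → (Fin t → V) → V → ℝ)
    (hπ : ∀ (t : ℕ) (h : Fin t → V), IsPMF (π t h)) (T : ℕ) (x : Fin T → V) :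
    0 ≤ seqProb π T x :=
  prod_nonneg fun _ _ => (hπ _ _).1 _

lemma sum_seqProb_snoc (π : (t : ℕ) → (Fin t → V) → V → ℝ) (T : ℕ)
    (hπ : ∀ y, ∑ v, π T y v = 1) (y : Fin T → V) :
    ∑ v, seqProb π (T + 1) (Fin.snoc y v) = seqProb π T y := by
  simp only [seqProb_snoc, ← mul_sum, hπ, mul_one]

lemma JS_seqProb_succ (p q : (t : ℕ) → (Fin t → V) → V → ℝ)
    (hp : ∀ (t : ℕ) (h : Fin t → V), IsPMF (p t h))
    (hq : ∀ (t : ℕ) (h : Fin t → V), IsPMF (q t h)) (T : ℕ) :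
    JS (seqProb p (T + 1)) (seqProb q (T + 1))
      = JS (seqProb p T) (seqProb q T) + ∑ y, (seqProb p T y + seqProb q T y) / 2 *
          skewJS (seqProb p T y / (seqProb p T y + seqProb q T y)) (p T y) (q T y) := by
  let e := (Equiv.prodComm _ _).trans (Fin.snocEquiv fun _ : Fin (T + 1) => V)
  have hcomp : ∀ π : (t : ℕ) → (Fin t → V) → V → ℝ,
      seqProb π (T + 1) ∘ e = fun x => seqProb π T x.1 * π T x.1 x.2 :=
    fun π => funext fun x => seqProb_snoc π T x.1 x.2
  rw [← JS_comp_equiv e, hcomp, hcomp]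
  exact JS_prod_eq_add _ _ _ _ (seqProb_nonneg p hp T) (seqProb_nonneg q hq T) (hp T) (hq T)

variable [DecidableEq V]

lemma prefixMarginal_succ {T t : ℕ} (A : (Fin (T + 1) → V) → ℝ) (ht : t ≤ T) (ht' : t ≤ T + 1)
    (h : Fin t → V) :
    prefixMarginal A ht' h = prefixMarginal (fun y => ∑ v, A (Fin.snoc y v)) ht h := by
  have hsnoc : ∀ (y : Fin T → V) (v : V) (i : Fin t),
      (Fin.snoc y v : Fin (T + 1) → V) (Fin.castLE ht' i) = y (Fin.castLE ht i) :=
    fun y v i => Fin.snoc_castSucc (α := fun _ => V) (i := Fin.castLE ht i) v y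
  rw [prefixMarginal, prefixMarginal, sum_filter, sum_filter,
    ← (Fin.snocEquiv fun _ => V).sum_comp, Fintype.sum_prod_type, sum_comm]
  simp only [Fin.snocEquiv_apply, hsnoc, sum_ite_irrel, sum_const_zero]
  rfl

lemma prefixMarginal_self {T : ℕ} (A : (Fin T → V) → ℝ) (ht : T ≤ T) (h : Fin T → V) :
    prefixMarginal A ht h = A h := by
  simp [prefixMarginal, ← funext_iff, filter_eq']

lemma prefixMarginal_add_div_two {T t : ℕ} (A B : (Fin T → V) → ℝ) (ht : t ≤ T) (h : Fin t → V) :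
    prefixMarginal (fun x => (A x + B x) / 2) ht h
      = (prefixMarginal A ht h + prefixMarginal B ht h) / 2 := by
  rw [prefixMarginal, prefixMarginal, prefixMarginal, ← sum_add_distrib, sum_div]

lemma prefixMarginal_seqProb_succ (π : (t : ℕ) → (Fin t → V) → V → ℝ) {T t : ℕ}
    (hπ : ∀ y, ∑ v, π T y v = 1) (ht : t ≤ T) (ht' : t ≤ T + 1) (h : Fin t → V) :
    prefixMarginal (seqProb π (T + 1)) ht' h = prefixMarginal (seqProb π T) ht h := by
  rw [prefixMarginal_succ _ ht]
  simp only [sum_seqProb_snoc π T hπ]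

end Sequences

/-- Chain rule for the Jensen–Shannon divergence of autoregressive distributions,
via history-dependent skew Jensen–Shannon divergences. -/
theorem js_chain_rule {V : Type*} [Fintype V] [DecidableEq V] (T : ℕ)
    (p q : (t : ℕ) → (Fin t → V) → V → ℝ)
    (hp : ∀ (t : ℕ) (h : Fin t → V), IsPMF (p t h))
    (hq : ∀ (t : ℕ) (h : Fin t → V), IsPMF (q t h)) :
    JS (seqProb p T) (seqProb q T)
      = ∑ t : Fin T, ∑ h : Fin (t : ℕ) → V,
          prefixMarginal (fun x => (seqProb p T x + seqProb q T x) / 2) t.isLt.le h *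
            skewJS
              (prefixMarginal (seqProb p T) t.isLt.le h /
                (prefixMarginal (seqProb p T) t.isLt.le h
                  + prefixMarginal (seqProb q T) t.isLt.le h))
              (p t h) (q t h) := by
  induction T with
  | zero => simp [JS, KL, seqProb]
  | succ T ih =>
    have hpT : ∀ y, ∑ v, p T y v = 1 := fun y => (hp T y).2
    have hqT : ∀ y, ∑ v, q T y v = 1 := fun y => (hq T y).2
    rw [JS_seqProb_succ p q hp hq, ih, Fin.sum_univ_castSucc]
    congr 1
    · refine sum_congr rfl fun t _ => sum_congr rfl fun h _ => ?_
      rw [prefixMarginal_add_div_two, prefixMarginal_add_div_two,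
        prefixMarginal_seqProb_succ p hpT t.isLt.le,
        prefixMarginal_seqProb_succ q hqT t.isLt.le]
      rfl
    · refine sum_congr rfl fun h _ => ?_
      rw [prefixMarginal_add_div_two, prefixMarginal_seqProb_succ p hpT le_rfl,
        prefixMarginal_seqProb_succ q hqT le_rfl, prefixMarginal_self, prefixMarginal_self]
      rfl
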